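/- arXiv:2406.11225 — 2 statements merged into one kernel-verified Lean document; each statement's English description precedes it below -/
import Mathlib

section
/- Given an alignment P of strings x and y, the set of costly edges of P together with their (x,y)-annotations, and the string x, uniquely determine the string y. -/
/-!
A non-costly edge of an alignment of `(x, y)` is diagonal. Hence both alignments run diagonally
except along the common set of costly edges, which each of them contains; since both start at
`(0, 0)` and end in column `|x|`, they are the same path. Every row `j < |y|` is crossed by an
edge of this path, whose `y`-label is `y_j`: for a costly edge it is part of the annotation, and
otherwise it equals the `x`-label, which is the same for `y` and `y'`.
-/

/-- A single step in the edit-distance grid: horizontal, vertical, or diagonal. -/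
def GridStep (p q : ℕ × ℕ) : Prop :=
  (q.1 = p.1 + 1 ∧ q.2 = p.2) ∨ (q.1 = p.1 ∧ q.2 = p.2 + 1) ∨
    (q.1 = p.1 + 1 ∧ q.2 = p.2 + 1)

/-- The list of (directed) edges of a path given as a list of vertices. -/
def pathEdges (P : List (ℕ × ℕ)) : List ((ℕ × ℕ) × (ℕ × ℕ)) := P.zip P.tail

/-- A spanning path (alignment) of `Grid(x,y)`. -/
def IsSpanningPath (m n : ℕ) (P : List (ℕ × ℕ)) : Prop :=
  P.head? = some (0, 0) ∧ P.getLast? = some (m, n) ∧ P.Chain' GridStep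

/-- For an edge `e = (i,j) → (i',j')`, `x_e = x_{i'}` if `i' = i+1` and `ε` (here `none`)
otherwise, and similarly `y_e`; `e` is costly iff `x_e ≠ y_e`. -/
def edgeLabelX {α : Type*} (x : List α) (e : (ℕ × ℕ) × (ℕ × ℕ)) : Option α :=
  if e.2.1 = e.1.1 + 1 then x[e.1.1]? else none

def edgeLabelY {α : Type*} (y : List α) (e : (ℕ × ℕ) × (ℕ × ℕ)) : Option α :=
  if e.2.2 = e.1.2 + 1 then y[e.1.2]? else none

def IsCostly {α : Type*} (x y : List α) (e : (ℕ × ℕ) × (ℕ × ℕ)) : Prop :=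
  edgeLabelX x e ≠ edgeLabelY y e

/-- The `(x,y)`-annotation of an edge `e` is the triple `(e, x_e, y_e)`. -/
def annot {α : Type*} (x y : List α) (e : (ℕ × ℕ) × (ℕ × ℕ)) :
    ((ℕ × ℕ) × (ℕ × ℕ)) × Option α × Option α :=
  (e, edgeLabelX x e, edgeLabelY y e)


lemma GridStep.lt {p q : ℕ × ℕ} (h : GridStep p q) : p < q := by
  rcases p with ⟨a, b⟩; rcases q with ⟨c, d⟩
  simp only [GridStep, Prod.lt_iff] at h ⊢
  omega

lemma snd_mem_of_mem_pathEdges {l : List (ℕ × ℕ)} {v w : ℕ × ℕ}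
    (he : (v, w) ∈ pathEdges l) : w ∈ l :=
  List.mem_of_mem_tail (List.of_mem_zip he).2

lemma mem_pathEdges_iff {l : List (ℕ × ℕ)} {e : (ℕ × ℕ) × (ℕ × ℕ)} :
    e ∈ pathEdges l ↔ ∃ i, l[i]? = some e.1 ∧ l[i + 1]? = some e.2 := by
  simp [pathEdges, List.mem_iff_getElem?, List.getElem?_zip_eq_some, List.getElem?_tail]

namespace List.IsChain

variable {l : List (ℕ × ℕ)}

lemma nodup (hl : l.IsChain GridStep) : l.Nodup :=
  (hl.imp fun _ _ h => h.lt).pairwise.nodup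

lemma le_of_getLast? (hl : l.IsChain GridStep) {z : ℕ × ℕ} (hz : l.getLast? = some z)
    {v : ℕ × ℕ} (hv : v ∈ l) : v ≤ z := by
  rw [List.getLast?_eq_some_getLast (List.ne_nil_of_mem hv), Option.some.injEq] at hz
  exact hz ▸ (hl.imp fun _ _ h => h.lt.le).pairwise.rel_getLast hv

lemma gridStep_of_mem_pathEdges (hl : l.IsChain GridStep) {v w : ℕ × ℕ}
    (he : (v, w) ∈ pathEdges l) : GridStep v w := by
  obtain ⟨i, hi, hi'⟩ := mem_pathEdges_iff.mp he
  obtain ⟨hlt, rfl⟩ := List.getElem?_eq_some_iff.mp hi'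
  obtain ⟨-, rfl⟩ := List.getElem?_eq_some_iff.mp hi
  exact List.isChain_iff_getElem.mp hl i hlt

lemma getElem?_succ_of_mem_pathEdges (hl : l.IsChain GridStep) {k : ℕ} {v w : ℕ × ℕ}
    (hk : l[k]? = some v) (he : (v, w) ∈ pathEdges l) : l[k + 1]? = some w := by
  obtain ⟨i, hi, hi'⟩ := mem_pathEdges_iff.mp he
  suffices i = k from this ▸ hi'
  have hne := List.nodup_iff_getElem?_ne_getElem?.mp hl.nodup
  have hklen := (List.getElem?_eq_some_iff.mp hk).1
  have hilen := (List.getElem?_eq_some_iff.mp hi).1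
  rcases lt_trichotomy i k with h | h | h
  · exact absurd (hi.trans hk.symm) (hne i k h hklen)
  · exact h
  · exact absurd (hk.trans hi.symm) (hne k i h hilen)

lemma eq_of_mem_pathEdges (hl : l.IsChain GridStep) {v w w' : ℕ × ℕ}
    (he : (v, w) ∈ pathEdges l) (he' : (v, w') ∈ pathEdges l) : w = w' := by
  obtain ⟨i, hi, hi'⟩ := mem_pathEdges_iff.mp he
  exact Option.some.inj (hi'.symm.trans (hl.getElem?_succ_of_mem_pathEdges hi he'))

lemma exists_mem_pathEdges_of_snd_lt (hl : l.IsChain GridStep) {a z : ℕ × ℕ}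
    (ha : l.head? = some a) (hz : l.getLast? = some z) {j : ℕ} (haj : a.2 ≤ j) (hjz : j < z.2) :
    ∃ e ∈ pathEdges l, e.1.2 = j ∧ e.2.2 = j + 1 := by
  induction l generalizing a with
  | nil => simp at ha
  | cons b t ih =>
    obtain rfl : b = a := by simpa using ha
    cases t with
    | nil =>
      obtain rfl : b = z := by simpa using hz
      omega
    | cons c t =>
      obtain ⟨hbc, hct⟩ := List.isChain_cons_cons.mp hl
      rw [List.getLast?_cons_cons] at hz
      by_cases hcj : c.2 ≤ j
      · obtain ⟨e, he, hej⟩ := ih hct rfl hz hcj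
        exact ⟨e, List.mem_cons_of_mem (b, c) he, hej⟩
      · refine ⟨(b, c), List.mem_cons_self, show b.2 = j ∧ c.2 = j + 1 from ?_⟩
        unfold GridStep at hbc
        omega

end List.IsChain

def IsDiagonal (e : (ℕ × ℕ) × (ℕ × ℕ)) : Prop := e.2 = (e.1.1 + 1, e.1.2 + 1)

lemma isDiagonal_of_not_isCostly {α : Type*} {x y : List α} {v w : ℕ × ℕ}
    (hvw : GridStep v w) (hx : w.1 ≤ x.length) (hy : w.2 ≤ y.length)
    (hc : ¬IsCostly x y (v, w)) :
    IsDiagonal (v, w) := by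
  rcases v with ⟨a, b⟩; rcases w with ⟨c, d⟩
  simp only [IsCostly, edgeLabelX, edgeLabelY, not_not] at hc
  simp only [GridStep] at hvw
  rcases hvw with ⟨rfl, rfl⟩ | ⟨rfl, rfl⟩ | ⟨rfl, rfl⟩
  · simp [List.getElem?_eq_getElem (show a < x.length by omega)] at hc
  · simp [List.getElem?_eq_getElem (show b < y.length by omega)] at hc
  · rfl

structure IsDiagonalOff (C : Set ((ℕ × ℕ) × (ℕ × ℕ))) (m : ℕ) (l : List (ℕ × ℕ)) :
    Prop where
  isChain : l.IsChain GridStep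
  getLast?_fst : ∀ z ∈ l.getLast?, z.1 = m
  subset_pathEdges : C ⊆ {e | e ∈ pathEdges l}
  mem_or_isDiagonal : ∀ e ∈ pathEdges l, e ∈ C ∨ IsDiagonal e

namespace IsDiagonalOff

variable {C : Set ((ℕ × ℕ) × (ℕ × ℕ))} {m : ℕ} {P Q : List (ℕ × ℕ)}

lemma fst_le (hP : IsDiagonalOff C m P) {v : ℕ × ℕ} (hv : v ∈ P) : v.1 ≤ m := by
  have hz := List.getLast?_eq_some_getLast (List.ne_nil_of_mem hv)
  exact hP.getLast?_fst _ hz ▸ (hP.isChain.le_of_getLast? hz hv).1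

lemma mem_pathEdges (hP : IsDiagonalOff C m P) (hQ : IsDiagonalOff C m Q) {v w : ℕ × ℕ}
    (he : (v, w) ∈ pathEdges P) (hv : v ∈ Q) : (v, w) ∈ pathEdges Q := by
  by_cases hC : (v, w) ∈ C
  · exact hQ.subset_pathEdges hC
  have hw : w = (v.1 + 1, v.2 + 1) := (hP.mem_or_isDiagonal _ he).resolve_left hC
  obtain ⟨k, hk⟩ := List.mem_iff_getElem?.mp hv
  cases hk' : Q[k + 1]? with
  | none =>
    -- `v` is the last vertex of `Q`, so it lies in column `m`, which the diagonal step leaves.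
    have hlast : Q.getLast? = some v := by
      rw [List.getLast?_eq_getElem?, ← hk]
      have := (List.getElem?_eq_some_iff.mp hk).1
      have := List.getElem?_eq_none_iff.mp hk'
      congr 1
      omega
    have := hP.fst_le (snd_mem_of_mem_pathEdges he)
    have := hQ.getLast?_fst v hlast
    rw [hw] at *
    omega
  | some w' =>
    have he' : (v, w') ∈ pathEdges Q := mem_pathEdges_iff.mpr ⟨k, hk, hk'⟩
    rcases hQ.mem_or_isDiagonal _ he' with hC' | hw'
    · rw [hP.isChain.eq_of_mem_pathEdges he (hP.subset_pathEdges hC')] at hC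
      exact absurd hC' hC
    · rwa [hw, ← show w' = _ from hw']

lemma eq (hP : IsDiagonalOff C m P) (hQ : IsDiagonalOff C m Q) (hhead : P.head? = Q.head?) :
    P = Q := by
  refine List.ext_getElem? fun k => ?_
  induction k with
  | zero => simpa [List.head?_eq_getElem?] using hhead
  | succ k ih =>
    cases hk : P[k]? with
    | none =>
      have hk' : Q[k]? = none := ih ▸ hk
      rw [List.getElem?_eq_none_iff] at hk hk'
      rw [List.getElem?_eq_none (by omega), List.getElem?_eq_none (by omega)]
    | some v =>
      have hk' : Q[k]? = some v := ih ▸ hk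
      refine Option.ext fun w => ⟨fun hw => ?_, fun hw => ?_⟩
      · exact hQ.isChain.getElem?_succ_of_mem_pathEdges hk' <|
          hP.mem_pathEdges hQ (mem_pathEdges_iff.mpr ⟨k, hk, hw⟩) (List.mem_of_getElem? hk')
      · exact hP.isChain.getElem?_succ_of_mem_pathEdges hk <|
          hQ.mem_pathEdges hP (mem_pathEdges_iff.mpr ⟨k, hk', hw⟩) (List.mem_of_getElem? hk)

end IsDiagonalOff

lemma IsSpanningPath.isDiagonalOff {α : Type*} {x y : List α} {P : List (ℕ × ℕ)}
    (hP : IsSpanningPath x.length y.length P) {C : Set ((ℕ × ℕ) × (ℕ × ℕ))}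
    (hCP : C ⊆ {e | e ∈ pathEdges P})
    (hPC : ∀ e ∈ pathEdges P, IsCostly x y e → e ∈ C) :
    IsDiagonalOff C x.length P where
  isChain := hP.2.2
  getLast?_fst z hz := by rw [hP.2.1, Option.mem_some_iff] at hz; rw [← hz]
  subset_pathEdges := hCP
  mem_or_isDiagonal := by
    rintro ⟨v, w⟩ he
    have hw := hP.2.2.le_of_getLast? hP.2.1 (snd_mem_of_mem_pathEdges he)
    exact or_iff_not_imp_left.mpr fun hC => isDiagonal_of_not_isCostly
      (hP.2.2.gridStep_of_mem_pathEdges he) hw.1 hw.2 fun hc => hC (hPC _ he hc)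

lemma eq_of_forall_edgeLabelY_eq {α : Type*} {y y' : List α} {l : List (ℕ × ℕ)} {m : ℕ}
    (hl : l.IsChain GridStep) (ha : l.head? = some (0, 0)) (hz : l.getLast? = some (m, y.length))
    (hlen : y.length = y'.length) (hlab : ∀ e ∈ pathEdges l, edgeLabelY y e = edgeLabelY y' e) :
    y = y' := by
  refine List.ext_getElem? fun j => ?_
  by_cases hj : j < y.length
  · obtain ⟨e, he, hej, hej'⟩ := hl.exists_mem_pathEdges_of_snd_lt ha hz (Nat.zero_le j) hj
    simpa [edgeLabelY, hej, hej'] using hlab e he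
  · rw [List.getElem?_eq_none (by omega), List.getElem?_eq_none (by omega)]

lemma mem_and_edgeLabelY_eq_of_image_annot_eq {α : Type*} {x y y' : List α}
    {S T : Set ((ℕ × ℕ) × (ℕ × ℕ))} (h : annot x y '' S = annot x y' '' T)
    {e : (ℕ × ℕ) × (ℕ × ℕ)} (he : e ∈ S) :
    e ∈ T ∧ edgeLabelY y e = edgeLabelY y' e := by
  obtain ⟨f, hf, hfe⟩ := h ▸ Set.mem_image_of_mem (annot x y) he
  simp only [annot, Prod.mk.injEq] at hfe
  obtain ⟨rfl, -, hY⟩ := hfe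
  exact ⟨hf, hY.symm⟩

/-- The set of costly edges of an alignment, together with their `(x,y)`-annotations,
and the string `x`, uniquely determine the string `y`: if `P` is an alignment of `(x,y)`
and `Q` is an alignment of `(x,y')` with the same annotated costly edge set, then `y = y'`. -/
theorem string_determined_by_annotated_costly {α : Type*} (x y y' : List α)
    (P Q : List (ℕ × ℕ))
    (hP : IsSpanningPath x.length y.length P)
    (hQ : IsSpanningPath x.length y'.length Q)
    (h : annot x y '' {e | e ∈ pathEdges P ∧ IsCostly x y e} =
         annot x y' '' {e | e ∈ pathEdges Q ∧ IsCostly x y' e}) :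
    y = y' := by
  have hPQ {e} (he : e ∈ {e | e ∈ pathEdges P ∧ IsCostly x y e}) :=
    mem_and_edgeLabelY_eq_of_image_annot_eq h he
  have hQP {e} (he : e ∈ {e | e ∈ pathEdges Q ∧ IsCostly x y' e}) :=
    (mem_and_edgeLabelY_eq_of_image_annot_eq h.symm he).1
  obtain rfl : P = Q :=
    (hP.isDiagonalOff (C := {e | e ∈ pathEdges P ∧ IsCostly x y e}) (fun _ he => he.1)
      fun _ he hc => ⟨he, hc⟩).eq
      (hQ.isDiagonalOff (fun _ he => (hPQ he).1.1) fun _ he hc => hQP ⟨he, hc⟩)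
      (hP.1.trans hQ.1.symm)
  have hlen : y.length = y'.length := by simpa using hP.2.1.symm.trans hQ.2.1
  refine eq_of_forall_edgeLabelY_eq hP.2.2 hP.1 hP.2.1 hlen fun e he => ?_
  by_cases hc : IsCostly x y e
  · exact (hPQ ⟨he, hc⟩).2
  · have hc' : ¬IsCostly x y' e := fun hc' => hc (hQP ⟨he, hc'⟩).2
    exact (not_ne_iff.mp hc).symm.trans (not_ne_iff.mp hc')
end

section
/- Fix a hash h : D → S and strings u,w ∈ Γ^D where Γ = F_p. For each j ∈ S with |h^{-1}(j) ∩ I_≠(u,w)| ≥ 2, the probability over a uniformly random α ∈ Γ that the filtering test passes — i.e., that Δ_{α,h}(u,w)_{j,value} ≠ 0, z_{j,index} < |D|, and Δ_{α,h}(u,w)_{j,hash} = α^{z_{j,index}}·(z_{j,x-val} − z_{j,y-val}) where z_j = restore(Δ_{α,h}(u,w)_j) — is at most (|D|−1)/|Γ|. -/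
/-!
When `Δ_value ≠ 0` and `2 ≠ 0`, `restore` gives `z_x-val − z_y-val = Δ_value`, so a passing `α`
is a root of `∑_{i ∈ h⁻¹(j)} (u_i − w_i) X^i − Δ_value X^{z_index}`. Among two mismatch indices
one differs from `z_index`, so this polynomial has a nonzero coefficient there; its degree is
below `|D|`, hence it has at most `|D| − 1` roots.
-/

open Finset

/-- The class of indices in `D = {0,…,n−1}` hashed by `h` to bucket `j`. -/
def hashClass {S : Type*} [DecidableEq S] (n : ℕ) (h : ℕ → S) (j : S) : Finset ℕ :=
  (Finset.range n).filter (fun i => h i = j)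

/-- The `value` component of the superposition trace difference at bucket `j`. -/
def dVal {S : Type*} [DecidableEq S] (p n : ℕ) (h : ℕ → S) (u w : ℕ → ZMod p) (j : S) :
    ZMod p :=
  ∑ i ∈ hashClass n h j, (u i - w i)

/-- The `product` component of the superposition trace difference at bucket `j`. -/
def dProd {S : Type*} [DecidableEq S] (p n : ℕ) (h : ℕ → S) (u w : ℕ → ZMod p) (j : S) :
    ZMod p :=
  ∑ i ∈ hashClass n h j, (i : ZMod p) * (u i - w i)

/-- The `square` component of the superposition trace difference at bucket `j`. -/
def dSq {S : Type*} [DecidableEq S] (p n : ℕ) (h : ℕ → S) (u w : ℕ → ZMod p) (j : S) :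
    ZMod p :=
  ∑ i ∈ hashClass n h j, (u i ^ 2 - w i ^ 2)

/-- The `hash` component of the superposition trace difference at bucket `j`. -/
def dHash {S : Type*} [DecidableEq S] (p n : ℕ) (h : ℕ → S) (u w : ℕ → ZMod p)
    (α : ZMod p) (j : S) : ZMod p :=
  ∑ i ∈ hashClass n h j, α ^ i * (u i - w i)

/-- The rebuilt index `z_{j,index}`. -/
noncomputable def zIndex {S : Type*} [DecidableEq S] (p n : ℕ) [Fact p.Prime]
    (h : ℕ → S) (u w : ℕ → ZMod p) (j : S) : ZMod p :=
  dProd p n h u w j / dVal p n h u w j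

/-- The rebuilt value `z_{j,x-val}`. -/
noncomputable def zX {S : Type*} [DecidableEq S] (p n : ℕ) [Fact p.Prime]
    (h : ℕ → S) (u w : ℕ → ZMod p) (j : S) : ZMod p :=
  (dSq p n h u w j + dVal p n h u w j ^ 2) / (2 * dVal p n h u w j)

/-- The rebuilt value `z_{j,y-val}`. -/
noncomputable def zY {S : Type*} [DecidableEq S] (p n : ℕ) [Fact p.Prime]
    (h : ℕ → S) (u w : ℕ → ZMod p) (j : S) : ZMod p :=
  (dSq p n h u w j - dVal p n h u w j ^ 2) / (2 * dVal p n h u w j)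

open Polynomial

theorem ncard_setOf_isRoot_le {K : Type*} [CommRing K] [IsDomain K] {P : K[X]} (hP : P ≠ 0) :
    {α | P.IsRoot α}.ncard ≤ P.natDegree := by
  classical
  calc {α | P.IsRoot α}.ncard = P.roots.toFinset.card := by
        rw [← Set.ncard_coe_finset]; congr; ext; simp [hP]
    _ ≤ P.roots.card := Multiset.toFinset_card_le _
    _ ≤ P.natDegree := card_roots' P

theorem ncard_setOf_sum_pow_mul_eq_pow_mul_le {K : Type*} [CommRing K] [IsDomain K]
    {s : Finset ℕ} {n k m : ℕ} (c : ℕ → K) (d : K) (hs : ∀ i ∈ s, i < n) (hk : k < n)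
    (hm : m ∈ s) (hcm : c m ≠ 0) (hmk : m ≠ k) :
    {α : K | ∑ i ∈ s, α ^ i * c i = α ^ k * d}.ncard ≤ n - 1 := by
  classical
  set P : K[X] := ∑ i ∈ s, monomial i (c i) - monomial k d
  have hroots : {α : K | ∑ i ∈ s, α ^ i * c i = α ^ k * d} = {α | P.IsRoot α} := by
    ext α
    simp [P, eval_finsetSum, sub_eq_zero, mul_comm]
  have hcoeff : P.coeff m = c m := by
    simp [P, coeff_monomial, hm, hmk.symm]
  have hP : P ≠ 0 := fun h0 => hcm (by rw [← hcoeff, h0, coeff_zero])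
  have hdeg : P.natDegree ≤ n - 1 := by
    refine (natDegree_sub_le _ _).trans (max_le ?_ ?_)
    · refine natDegree_sum_le_of_forall_le _ _ fun i hi => ?_
      exact (natDegree_monomial_le _).trans (by have := hs i hi; omega)
    · exact (natDegree_monomial_le _).trans (by omega)
  rw [hroots]
  exact (ncard_setOf_isRoot_le hP).trans hdeg

theorem zX_sub_zY {S : Type*} [DecidableEq S] {p n : ℕ} [Fact p.Prime] {h : ℕ → S}
    {u w : ℕ → ZMod p} {j : S} (htwo : (2 : ZMod p) ≠ 0) (hval : dVal p n h u w j ≠ 0) :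
    zX p n h u w j - zY p n h u w j = dVal p n h u w j := by
  unfold zX zY
  field_simp
  ring

theorem filtering_test_probability_general {S : Type*} [DecidableEq S]
    (p n : ℕ) [hp : Fact p.Prime] (hp2 : p ≠ 2)
    (h : ℕ → S) (u w : ℕ → ZMod p) (j : S)
    (hmm : 2 ≤ ((Finset.range n).filter (fun i => u i ≠ w i ∧ h i = j)).card) :
    (({α : ZMod p |
        dVal p n h u w j ≠ 0 ∧
        (zIndex p n h u w j).val < n ∧
        dHash p n h u w α j =
          α ^ (zIndex p n h u w j).val * (zX p n h u w j - zY p n h u w j)}.ncard : ℚ) / p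
      ≤ ((n : ℚ) - 1) / p) := by
  have hn : 0 < n := by
    have := hmm.trans ((card_filter_le _ _).trans (card_range n).le)
    omega
  refine div_le_div_of_nonneg_right ?_ (Nat.cast_nonneg p)
  rw [← Nat.cast_pred hn, Nat.cast_le]
  by_cases hpass : dVal p n h u w j ≠ 0 ∧ (zIndex p n h u w j).val < n
  · obtain ⟨m, hm, hmk⟩ := exists_mem_ne hmm (zIndex p n h u w j).val
    obtain ⟨hmn, hmw, hmj⟩ : m < n ∧ u m ≠ w m ∧ h m = j := by simpa using hm
    have htwo : (2 : ZMod p) ≠ 0 := Ring.two_ne_zero (by rwa [ZMod.ringChar_zmod_n])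
    simp only [hpass, zX_sub_zY htwo hpass.1, ne_eq, not_false_eq_true, true_and]
    refine ncard_setOf_sum_pow_mul_eq_pow_mul_le (fun i => u i - w i) _ (fun i hi => ?_)
      hpass.2 (by simpa [hashClass] using ⟨hmn, hmj⟩) (sub_ne_zero.mpr hmw) hmk
    exact mem_range.mp (mem_filter.mp hi).1
  · convert Nat.zero_le (n - 1)
    convert Set.ncard_empty (ZMod p)
    exact Set.eq_empty_of_forall_notMem fun _ hα => hpass ⟨hα.1, hα.2.1⟩

/-- If the bucket `j` contains at least two mismatch indices of `(u,w)`, then the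
probability over a uniformly random `α ∈ F_p` that the filtering test passes —
`Δ_value ≠ 0`, `z_index < |D|`, and `Δ_hash = α^{z_index}·(z_{x-val} − z_{y-val})` —
is at most `(|D|−1)/|Γ|`. -/
theorem filtering_test_probability {S : Type*} [DecidableEq S]
    (p n : ℕ) [hp : Fact p.Prime] [NeZero p] (hp2 : p ≠ 2)
    (h : ℕ → S) (u w : ℕ → ZMod p) (j : S)
    (hmm : 2 ≤ ((Finset.range n).filter (fun i => u i ≠ w i ∧ h i = j)).card) :
    (({α : ZMod p |
        dVal p n h u w j ≠ 0 ∧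
        (zIndex p n h u w j).val < n ∧
        dHash p n h u w α j =
          α ^ (zIndex p n h u w j).val * (zX p n h u w j - zY p n h u w j)}.ncard : ℚ) / p
      ≤ ((n : ℚ) - 1) / p) :=
  filtering_test_probability_general p n (hp := hp) hp2 h u w j hmm
end
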